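/- arXiv:1901.01063 — 5 statements merged into one kernel-verified Lean document; each statement's English description precedes it below -/
import Mathlib

section
/- Let r, s be coprime nonzero integers with r^2+4s ≠ 0, let α, β be the two roots of x^2 - rx - s = 0 with |α| ≥ |β|, and assume α/β is not a root of unity. Let U_0 = 0, U_1 = 1, U_{n+2} = r·U_{n+1} + s·U_n. Suppose n ≥ 150 and |U_n| = m_1!·m_2!⋯m_k! with 1 < m_1 ≤ ⋯ ≤ m_k. Then n·log|α| ≥ Σ_{i : m_i ≥ n-1} m_i·(log m_i − 1). -/
/-!
By Binet's formula `(α - β) U n = α ^ n - β ^ n`, and `|α - β| ≥ 1` because `(α - β) ^ 2 = r ^ 2 + 4 s`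
is a nonzero integer, so `|U n| ≤ 2 |α| ^ n`. On the other hand Stirling's lower bound gives
`log m! ≥ log 2 + m (log m - 1)` for `m ≥ 1`; taking logarithms of `∏ mᵢ! = |U n|` and keeping only
the factors with `mᵢ ≥ n - 1` yields the claim (one `log 2` suffices to absorb the `2`). If there are
no such factors, the claim is `n log |α| ≥ 0`, which holds since `|α| ^ 2 ≥ |α β| = |s| ≥ 1`.
-/

open Real Finset
open scoped Nat

lemma log_two_add_mul_log_sub_one_le_log_factorial {m : ℕ} (hm : m ≠ 0) :
    log 2 + m * (log m - 1) ≤ log (m ! : ℝ) := by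
  have hstirling := Stirling.le_log_factorial_stirling hm
  have hm1 : (1 : ℝ) ≤ m := Nat.one_le_cast.mpr (Nat.one_le_iff_ne_zero.mpr hm)
  have h4 : log 4 ≤ log (2 * π) + log m := by
    rw [← log_mul (by positivity) (by positivity)]
    exact log_le_log (by norm_num) (by nlinarith [pi_gt_three])
  have hlog4 : log 4 = 2 * log 2 := by
    rw [show (4 : ℝ) = 2 ^ 2 by norm_num, log_pow]; push_cast; ring
  linarith

lemma log_two_add_sum_le_log_prod_factorial {ι : Type*} {S : Finset ι} {m : ι → ℕ}
    (hS : S.Nonempty) (hm : ∀ i ∈ S, m i ≠ 0) :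
    log 2 + ∑ i ∈ S, (m i : ℝ) * (log (m i) - 1) ≤ log (∏ i ∈ S, (m i)! : ℝ) := by
  have hcard : (1 : ℝ) ≤ #S := Nat.one_le_cast.mpr hS.card_pos
  have hlog2 : log 2 ≤ #S * log 2 := le_mul_of_one_le_left (log_nonneg one_le_two) hcard
  calc log 2 + ∑ i ∈ S, (m i : ℝ) * (log (m i) - 1)
      ≤ ∑ i ∈ S, (log 2 + (m i : ℝ) * (log (m i) - 1)) := by
        rw [sum_add_distrib, sum_const, nsmul_eq_mul]; linarith
    _ ≤ ∑ i ∈ S, log ((m i)! : ℝ) :=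
        sum_le_sum fun i hi => log_two_add_mul_log_sub_one_le_log_factorial (hm i hi)
    _ = log (∏ i ∈ S, (m i)! : ℝ) :=
        (log_prod fun i _ => Nat.cast_ne_zero.mpr (Nat.factorial_ne_zero _)).symm

lemma one_le_norm_of_mul_eq_neg_intCast {s : ℤ} {α β : ℂ} (hprod : α * β = -s) (hs : s ≠ 0)
    (habs : ‖β‖ ≤ ‖α‖) : 1 ≤ ‖α‖ := by
  have h1 : (1 : ℝ) ≤ ‖α‖ * ‖β‖ := by
    rw [← norm_mul, hprod, norm_neg, Complex.norm_intCast]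
    exact_mod_cast Int.one_le_abs hs
  nlinarith [norm_nonneg β]

section Lucas

variable {r s : ℤ} {α β : ℂ} (hsum : α + β = r) (hprod : α * β = -s)
include hsum hprod

lemma one_le_norm_sub_of_discr_ne_zero (hdisc : r ^ 2 + 4 * s ≠ 0) : 1 ≤ ‖α - β‖ := by
  have hsq : (α - β) ^ 2 = ((r ^ 2 + 4 * s : ℤ) : ℂ) := by
    push_cast
    linear_combination (α + β + r) * hsum - 4 * hprod
  have h1 : (1 : ℝ) ≤ ‖α - β‖ ^ 2 := by
    rw [← norm_pow, hsq, Complex.norm_intCast]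
    exact_mod_cast Int.one_le_abs hdisc
  nlinarith [norm_nonneg (α - β)]

variable {U : ℕ → ℤ} (hU0 : U 0 = 0) (hU1 : U 1 = 1)
  (hUrec : ∀ n, U (n + 2) = r * U (n + 1) + s * U n)
include hU0 hU1 hUrec

lemma lucas_binet (n : ℕ) : (α - β) * U n = α ^ n - β ^ n := by
  induction n using Nat.twoStepInduction with
  | zero => simp [hU0]
  | one => simp [hU1]
  | more n ih₀ ih₁ =>
    rw [hUrec n]
    push_cast
    rw [← hsum, show (s : ℂ) = -(α * β) by rw [hprod, neg_neg]]
    linear_combination (α + β) * ih₁ - α * β * ih₀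

lemma natAbs_lucas_le_two_mul_norm_pow (hdisc : r ^ 2 + 4 * s ≠ 0) (habs : ‖β‖ ≤ ‖α‖) (n : ℕ) :
    ((U n).natAbs : ℝ) ≤ 2 * ‖α‖ ^ n := by
  have hdiff := one_le_norm_sub_of_discr_ne_zero hsum hprod hdisc
  have hβα : ‖β‖ ^ n ≤ ‖α‖ ^ n := pow_le_pow_left₀ (norm_nonneg β) habs n
  have hnorm : ‖α - β‖ * |(U n : ℝ)| ≤ 2 * ‖α‖ ^ n := by
    rw [← Complex.norm_intCast, ← norm_mul, lucas_binet hsum hprod hU0 hU1 hUrec]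
    calc ‖α ^ n - β ^ n‖ ≤ ‖α‖ ^ n + ‖β‖ ^ n := by
          rw [← norm_pow, ← norm_pow]; exact norm_sub_le _ _
      _ ≤ 2 * ‖α‖ ^ n := by linarith
  rw [Nat.cast_natAbs, Int.cast_abs]
  nlinarith [abs_nonneg (U n : ℝ)]

end Lucas

theorem lucas_factorial_sum_upper_bound_general
    (r s : ℤ) (hs : s ≠ 0)
    (hdisc : r ^ 2 + 4 * s ≠ 0)
    (α β : ℂ) (hsum : α + β = (r : ℂ)) (hprod : α * β = -(s : ℂ))
    (habs : ‖β‖ ≤ ‖α‖)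
    (U : ℕ → ℤ) (hU0 : U 0 = 0) (hU1 : U 1 = 1)
    (hUrec : ∀ n : ℕ, U (n + 2) = r * U (n + 1) + s * U n)
    (n : ℕ)
    (k : ℕ) (m : Fin k → ℕ)
    (hm1 : ∀ i, 1 < m i)
    (hfac : (U n).natAbs = ∏ i, Nat.factorial (m i)) :
    ∑ i ∈ Finset.univ.filter (fun i => n - 1 ≤ m i),
        (m i : ℝ) * (Real.log (m i) - 1) ≤ n * Real.log ‖α‖ := by
  set S := univ.filter fun i => n - 1 ≤ m i
  have hα := one_le_norm_of_mul_eq_neg_intCast hprod hs habs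
  rcases S.eq_empty_or_nonempty with hS | hS
  · rw [hS, sum_empty]
    exact mul_nonneg n.cast_nonneg (log_nonneg hα)
  have hsub : ∏ i ∈ S, (m i)! ≤ (U n).natAbs :=
    hfac ▸ prod_le_prod_of_subset_of_one_le' (subset_univ S) fun i _ _ => Nat.one_le_of_lt
      (Nat.factorial_pos _)
  suffices log 2 + ∑ i ∈ S, (m i : ℝ) * (log (m i) - 1) ≤ log 2 + n * log ‖α‖ by linarith
  calc log 2 + ∑ i ∈ S, (m i : ℝ) * (log (m i) - 1)
      ≤ log (∏ i ∈ S, (m i)! : ℝ) :=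
        log_two_add_sum_le_log_prod_factorial hS fun i _ => (hm1 i).ne_bot
    _ ≤ log ((U n).natAbs : ℝ) :=
        log_le_log (by positivity) (by exact_mod_cast hsub)
    _ ≤ log (2 * ‖α‖ ^ n) :=
        log_le_log (by exact_mod_cast (prod_pos fun i _ => (m i).factorial_pos).trans_le hsub)
          (natAbs_lucas_le_two_mul_norm_pow hsum hprod hU0 hU1 hUrec hdisc habs n)
    _ = log 2 + n * log ‖α‖ := by
        rw [log_mul two_ne_zero (by positivity), log_pow]

/-- If `n ≥ 150` and `|U n| = m₁! ⋯ m_k!` with `1 < m₁ ≤ ⋯ ≤ m_k`, then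
`n log |α| ≥ Σ_{i : mᵢ ≥ n-1} mᵢ (log mᵢ − 1)`. -/
theorem lucas_factorial_sum_upper_bound
    (r s : ℤ) (hr : r ≠ 0) (hs : s ≠ 0) (hrs : IsCoprime r s)
    (hdisc : r ^ 2 + 4 * s ≠ 0)
    (α β : ℂ) (hsum : α + β = (r : ℂ)) (hprod : α * β = -(s : ℂ))
    (habs : ‖β‖ ≤ ‖α‖)
    (hnru : ∀ k : ℕ, 0 < k → (α / β) ^ k ≠ 1)
    (U : ℕ → ℤ) (hU0 : U 0 = 0) (hU1 : U 1 = 1)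
    (hUrec : ∀ n : ℕ, U (n + 2) = r * U (n + 1) + s * U n)
    (n : ℕ) (hn : 150 ≤ n)
    (k : ℕ) (hk : 1 ≤ k) (m : Fin k → ℕ)
    (hm1 : ∀ i, 1 < m i) (hmono : Monotone m)
    (hfac : (U n).natAbs = ∏ i, Nat.factorial (m i)) :
    ∑ i ∈ Finset.univ.filter (fun i => n - 1 ≤ m i),
        (m i : ℝ) * (Real.log (m i) - 1) ≤ n * Real.log ‖α‖ :=
  lucas_factorial_sum_upper_bound_general r s hs hdisc α β hsum hprod habs U hU0 hU1 hUrec n k m hm1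
    hfac
end

section
/- Let r, s be coprime nonzero integers with r^2+4s > 0, let α, β be the (real) roots of x^2 - rx - s = 0 with |α| ≥ |β|, and assume α/β is not a root of unity. For every integer n ≥ 2, log|Φ_n(α,β)| ≥ φ(n)·log|α| − 2^{ω(n)−1}·(log 2 + log|α|), where Φ_n(α,β) = ∏_{d | n} (α^{n/d} − β^{n/d})^{μ(d)}, φ is Euler's totient function, ω(n) is the number of distinct prime factors of n, and μ is the Möbius function. -/
open ArithmeticFunction Finset

/-- For real roots, `log |Φ_n(α,β)| ≥ φ(n) log |α| − 2^{ω(n)−1} (log 2 + log |α|)`. -/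
theorem log_cyclotomic_specialization_lower_bound_real
    (r s : ℤ) (hr : r ≠ 0) (hs : s ≠ 0) (hrs : IsCoprime r s)
    (hdisc : 0 < r ^ 2 + 4 * s)
    (α β : ℝ) (hsum : α + β = (r : ℝ)) (hprod : α * β = -(s : ℝ))
    (habs : |β| ≤ |α|)
    (hnru : ∀ k : ℕ, 0 < k → (α / β) ^ k ≠ 1)
    (n : ℕ) (hn : 2 ≤ n) :
    (Nat.totient n : ℝ) * Real.log |α| -
        (2 : ℝ) ^ (n.primeFactors.card - 1) * (Real.log 2 + Real.log |α|) ≤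
      Real.log |∏ d ∈ n.divisors,
        (α ^ (n / d) - β ^ (n / d)) ^ (ArithmeticFunction.moebius d)| := by
  have hs1 : (1:ℝ) ≤ |(s:ℝ)| := by
    have h : (1:ℤ) ≤ |s| := Int.one_le_abs hs
    calc (1:ℝ) = ((1:ℤ):ℝ) := by norm_num
    _ ≤ ((|s|:ℤ):ℝ) := by exact_mod_cast h
    _ = |(s:ℝ)| := by push_cast; ring
  have hβ0 : β ≠ 0 := by
    intro h; rw [h, mul_zero] at hprod
    have : (s:ℝ) = 0 := by linarith
    exact hs (by exact_mod_cast this)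
  have hα0 : α ≠ 0 := by
    intro h; rw [h, zero_mul] at hprod
    have : (s:ℝ) = 0 := by linarith
    exact hs (by exact_mod_cast this)
  have hab : |α| * |β| = |(s:ℝ)| := by rw [← abs_mul, hprod, abs_neg]
  have ha1 : (1:ℝ) ≤ |α| := by nlinarith [abs_nonneg β, abs_nonneg α]
  have hd1 : (1:ℝ) ≤ |α - β| := by
    have h1 : (1:ℝ) ≤ ((r:ℝ)^2 + 4*(s:ℝ)) := by
      have : (1:ℤ) ≤ r^2 + 4*s := hdisc
      exact_mod_cast this
    have h2 : (α - β)^2 = (r:ℝ)^2 + 4*(s:ℝ) := by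
      linear_combination (α + β + (r:ℝ)) * hsum - 4 * hprod
    nlinarith [abs_nonneg (α - β), sq_abs (α - β)]
  have hr1 : (1:ℝ) ≤ |(r:ℝ)| := by
    have h : (1:ℤ) ≤ |r| := Int.one_le_abs hr
    calc (1:ℝ) = ((1:ℤ):ℝ) := by norm_num
    _ ≤ ((|r|:ℤ):ℝ) := by exact_mod_cast h
    _ = |(r:ℝ)| := by push_cast; ring
  -- key quadratic gap: |α| ≤ |α|² − |β|²
  have hkey2 : |α| ≤ |α|^2 - |β|^2 := by
    have hsqle : β^2 ≤ α^2 := by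
      have := mul_self_le_mul_self (abs_nonneg β) habs
      nlinarith [sq_abs α, sq_abs β]
    have h3 : |α|^2 - |β|^2 = |(r:ℝ)| * |α - β| := by
      rw [← hsum, ← abs_mul]
      have e : (α + β) * (α - β) = α^2 - β^2 := by ring
      have hnn : (0:ℝ) ≤ α^2 - β^2 := by linarith
      rw [e, abs_of_nonneg hnn, sq_abs, sq_abs]
    have h2a : 2*|α| ≤ |(r:ℝ)| + |α - β| := by
      have e : (2:ℝ)*|α| = |(α+β)+(α-β)| := by
        rw [show (α+β)+(α-β) = 2*α by ring, abs_mul]; norm_num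
      rw [e, ← hsum]
      exact abs_add_le _ _
    nlinarith [h3, h2a, hr1, hd1]
  -- nonvanishing
  have hne : ∀ m : ℕ, 1 ≤ m → α ^ m - β ^ m ≠ 0 := by
    intro m hm h
    apply hnru m hm
    rw [div_pow, div_eq_one_iff_eq (pow_ne_zero m hβ0)]
    linarith
  set la := Real.log |α| with hla
  have hla0 : 0 ≤ la := Real.log_nonneg ha1
  have hl2 : (0:ℝ) ≤ Real.log 2 := Real.log_nonneg (by norm_num)
  -- lower bound on each factor
  have hLlow : ∀ m : ℕ, 1 ≤ m → (m:ℝ) * la - la ≤ Real.log |α^m - β^m| := by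
    intro m hm
    have hlow : |α|^(m-1) ≤ |α^m - β^m| := by
      have htri : |α|^m - |β|^m ≤ |α^m - β^m| := by
        simpa [abs_pow] using abs_sub_abs_le_abs_sub (α^m) (β^m)
      rcases eq_or_lt_of_le hm with h1 | h2
      · rw [← h1]; simpa using hd1
      · have hm2 : 2 ≤ m := h2
        have hb : |β|^(m-2) ≤ |α|^(m-2) := pow_le_pow_left₀ (abs_nonneg β) habs _
        have e1 : |α|^2 * |α|^(m-2) = |α|^m := by rw [← pow_add]; congr 1; omega
        have e2 : |β|^2 * |β|^(m-2) = |β|^m := by rw [← pow_add]; congr 1; omega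
        have e3 : |α| * |α|^(m-2) = |α|^(m-1) := by rw [← pow_succ']; congr 1; omega
        have h5 : |β|^2 * |β|^(m-2) ≤ |β|^2 * |α|^(m-2) :=
          mul_le_mul_of_nonneg_left hb (sq_nonneg _)
        have h4 : |α|^(m-1) ≤ (|α|^2 - |β|^2) * |α|^(m-2) := by
          rw [← e3]
          exact mul_le_mul_of_nonneg_right hkey2 (pow_nonneg (abs_nonneg α) _)
        nlinarith
    have h := Real.log_le_log (by positivity) hlow
    rw [Real.log_pow] at h
    have hc : ((m-1 : ℕ):ℝ) = (m:ℝ) - 1 := by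
      rw [Nat.cast_sub hm]; norm_num
    rw [hc] at h
    linarith
  -- upper bound on each factor
  have hLup : ∀ m : ℕ, 1 ≤ m → Real.log |α^m - β^m| ≤ Real.log 2 + (m:ℝ) * la := by
    intro m hm
    have hup : |α^m - β^m| ≤ 2 * |α|^m := by
      have h1 : |α^m - β^m| ≤ |α^m| + |β^m| := abs_sub _ _
      have h2 : |β|^m ≤ |α|^m := pow_le_pow_left₀ (abs_nonneg β) habs m
      rw [abs_pow, abs_pow] at h1
      linarith
    have h := Real.log_le_log (abs_pos.mpr (hne m hm)) hup
    rw [Real.log_mul (by norm_num) (by positivity), Real.log_pow] at h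
    exact h
  -- every divisor gives positive quotient
  have hm1 : ∀ d ∈ n.divisors, 1 ≤ n / d := fun d hd =>
    Nat.div_pos (Nat.le_of_dvd (by omega) (Nat.dvd_of_mem_divisors hd))
      (Nat.pos_of_mem_divisors hd)
  -- log of the product
  have hprod_log : Real.log |∏ d ∈ n.divisors,
        (α ^ (n / d) - β ^ (n / d)) ^ (moebius d)| =
      ∑ d ∈ n.divisors, (moebius d : ℝ) * Real.log |α^(n/d) - β^(n/d)| := by
    rw [Real.log_abs, Real.log_prod
      (fun d hd => zpow_ne_zero _ (hne (n/d) (hm1 d hd)))]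
    exact Finset.sum_congr rfl fun d hd => by rw [Real.log_zpow, Real.log_abs]
  -- arithmetic identities
  have htot : ∑ d ∈ n.divisors, (moebius d) * ((n/d : ℕ) : ℤ) = (Nat.totient n : ℤ) := by
    have h := (sum_eq_iff_sum_smul_moebius_eq
        (f := fun d => (Nat.totient d : ℤ)) (g := fun d => (d : ℤ))).mp
      (fun m hm => by exact_mod_cast Nat.sum_totient m) n (by omega)
    rw [← h, Nat.sum_divisorsAntidiagonal (fun x y => moebius x • (y:ℤ))]
    exact Finset.sum_congr rfl fun d hd => by push_cast [zsmul_eq_mul]; ring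
  have hmu0 : ∑ d ∈ n.divisors, (moebius d) = 0 := by
    have h : (moebius * ArithmeticFunction.zeta : ArithmeticFunction ℤ) n = ∑ d ∈ n.divisors, moebius d :=
      coe_mul_zeta_apply
    rw [moebius_mul_coe_zeta, one_apply_ne (by omega : n ≠ 1)] at h
    exact h.symm
  have hmu2 : ∑ d ∈ n.divisors, (moebius d)^2 = 2^(n.primeFactors.card) := by
    have h1 : ∑ d ∈ n.divisors with Squarefree d, (moebius d)^2
        = ∑ d ∈ n.divisors, (moebius d)^2 :=
      Finset.sum_filter_of_ne fun d _ h =>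
        moebius_ne_zero_iff_squarefree.mp (fun h0 => h (by rw [h0]; ring))
    have h2 : ∑ d ∈ n.divisors with Squarefree d, (moebius d)^2
        = ∑ d ∈ n.divisors with Squarefree d, (1:ℤ) :=
      Finset.sum_congr rfl fun d hd =>
        moebius_sq_eq_one_of_squarefree (Finset.mem_filter.mp hd).2
    rw [← h1, h2, Nat.sum_divisors_filter_squarefree (by omega : n ≠ 0),
      Finset.sum_const, Finset.card_powerset, Nat.factors_eq]
    simp
  -- cast them to ℝ
  have ctot : ∑ d ∈ n.divisors, (moebius d : ℝ) * ((n/d : ℕ) : ℝ) = (Nat.totient n : ℝ) := by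
    have h := congrArg (fun z : ℤ => (z:ℝ)) htot
    push_cast at h
    exact h
  have cmu0 : ∑ d ∈ n.divisors, (moebius d : ℝ) = 0 := by exact_mod_cast hmu0
  have cmu2 : ∑ d ∈ n.divisors, (moebius d : ℝ)^2 = 2^(n.primeFactors.card) := by
    exact_mod_cast hmu2
  have hω : 1 ≤ n.primeFactors.card :=
    (Nat.nonempty_primeFactors.mpr (by omega)).card_pos
  have hpow : (2:ℝ)^(n.primeFactors.card) = 2 * 2^(n.primeFactors.card - 1) := by
    rw [← pow_succ']; congr 1; omega
  -- the sum identity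
  have hsum_eq : ∑ d ∈ n.divisors,
      ((moebius d : ℝ) * ((n/d : ℕ) : ℝ) * la
        - ((moebius d : ℝ)^2 * (Real.log 2 + la) + (moebius d : ℝ) * (la - Real.log 2))/2)
      = (Nat.totient n : ℝ) * la
        - (2:ℝ)^(n.primeFactors.card - 1) * (Real.log 2 + la) := by
    rw [Finset.sum_sub_distrib, ← Finset.sum_div, Finset.sum_add_distrib,
      ← Finset.sum_mul, ← Finset.sum_mul, ← Finset.sum_mul, ctot, cmu0, cmu2, hpow]
    ring
  rw [hprod_log, ← hsum_eq]
  apply Finset.sum_le_sum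
  intro d hd
  set m := n / d with hm
  have hmd : 1 ≤ m := hm1 d hd
  by_cases hsq : Squarefree d
  · have hsqone := moebius_sq_eq_one_of_squarefree hsq
    have hz : (moebius d - 1) * (moebius d + 1) = 0 := by linear_combination hsqone
    rcases mul_eq_zero.mp hz with h | h
    · have h1 : moebius d = 1 := by omega
      rw [h1]; push_cast
      linarith [hLlow m hmd]
    · have h1 : moebius d = -1 := by omega
      rw [h1]; push_cast
      linarith [hLup m hmd]
  · rw [moebius_eq_zero_of_not_squarefree hsq]
    push_cast
    simp
end

section
/- Let r be a nonzero integer and s ∈ {1, -1} with r^2+4s > 0, let α, β be the (real) roots of x^2 - rx - s = 0 with |α| ≥ |β| (so β = ±α^{-1} and |α| ≥ (1+√5)/2), and assume α/β is not a root of unity. Then for every integer n ≥ 2, log|Φ_n(α,β)| ≥ φ(n)·log|α| − 1.28, where Φ_n(α,β) = ∏_{d | n} (α^{n/d} − β^{n/d})^{μ(d)}. -/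
open Finset Real

private lemma totient_eq_sum_moebius_real (n : ℕ) (hn : 0 < n) :
    (Nat.totient n : ℝ) =
      ∑ d ∈ n.divisors, (ArithmeticFunction.moebius d : ℝ) * ((n / d : ℕ) : ℝ) := by
  have h := (ArithmeticFunction.sum_eq_iff_sum_mul_moebius_eq (R := ℝ)
      (f := fun d => (Nat.totient d : ℝ)) (g := fun d => (d : ℝ))).mp ?_ n hn
  · rw [← h, Nat.sum_divisorsAntidiagonal
      (fun a b => ((ArithmeticFunction.moebius a : ℤ) : ℝ) * (b : ℝ))]
  · intro m hm
    exact_mod_cast congrArg (fun k : ℕ => (k : ℝ)) (Nat.sum_totient m)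

set_option maxHeartbeats 2000000 in
/-- For `s = ±1` (so `β = ±α⁻¹` and `|α| ≥ (1+√5)/2`),
`log |Φ_n(α,β)| ≥ φ(n) log |α| − 1.28`. -/
theorem log_cyclotomic_specialization_lower_bound_unit_s
    (r s : ℤ) (hr : r ≠ 0) (hs : s = 1 ∨ s = -1)
    (hdisc : 0 < r ^ 2 + 4 * s)
    (α β : ℝ) (hsum : α + β = (r : ℝ)) (hprod : α * β = -(s : ℝ))
    (habs : |β| ≤ |α|)
    (hnru : ∀ k : ℕ, 0 < k → (α / β) ^ k ≠ 1)
    (n : ℕ) (hn : 2 ≤ n) :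
    (Nat.totient n : ℝ) * Real.log |α| - 1.28 ≤
      Real.log |∏ d ∈ n.divisors,
        (α ^ (n / d) - β ^ (n / d)) ^ (ArithmeticFunction.moebius d)| := by
  set a := |α| with ha_def
  -- basic facts
  have hprod1 : |α * β| = 1 := by
    rcases hs with h | h <;> simp [hprod, h]
  have hab1 : a * |β| = 1 := by rw [← abs_mul]; exact hprod1
  have hβ0 : β ≠ 0 := by
    intro h; rw [h, mul_zero] at hprod1; simp at hprod1
  have hα0 : α ≠ 0 := by
    intro h; rw [h, zero_mul] at hprod1; simp at hprod1
  have ha0 : 0 < a := abs_pos.mpr hα0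
  have hβa : |β| = a⁻¹ := by field_simp [eq_comm, mul_comm] at hab1 ⊢; linarith
  -- α² + β² ≥ 3
  have hsq3 : 3 ≤ α ^ 2 + β ^ 2 := by
    have hexp : α ^ 2 + β ^ 2 = (r : ℝ) ^ 2 + 2 * (s : ℝ) := by
      have : (α + β) ^ 2 = α ^ 2 + β ^ 2 + 2 * (α * β) := by ring
      rw [hsum, hprod] at this
      linarith
    rcases hs with h | h
    · have hr1 : (1 : ℤ) ≤ r ^ 2 := by
        rcases lt_or_gt_of_ne hr with h' | h' <;> nlinarith
      have : (1 : ℝ) ≤ (r : ℝ) ^ 2 := by exact_mod_cast hr1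
      rw [hexp, h]; push_cast; linarith
    · have hr5 : (5 : ℤ) ≤ r ^ 2 := by
        rw [h] at hdisc
        rcases le_or_gt r 2 with h' | h'
        · rcases le_or_gt (-2) r with h'' | h'' <;> nlinarith
        · nlinarith
      have : (5 : ℝ) ≤ (r : ℝ) ^ 2 := by exact_mod_cast hr5
      rw [hexp, h]; push_cast; linarith
  have haα : a ^ 2 = α ^ 2 := sq_abs α
  have haβ : |β| ^ 2 = β ^ 2 := sq_abs β
  have hββ : β ^ 2 ≤ α ^ 2 := by rw [← haα, ← haβ]; exact pow_le_pow_left₀ (abs_nonneg β) habs 2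
  have hprodsq : α ^ 2 * β ^ 2 = 1 := by
    have : (α * β) ^ 2 = 1 := by rcases hs with h | h <;> rw [hprod, h] <;> norm_num
    nlinarith
  have ha1 : 1 ≤ a := by nlinarith
  -- the key inequality a² ≥ a + 1
  have hkey : a + 1 ≤ a ^ 2 := by
    have h1 : a ^ 2 + (a ^ 2)⁻¹ ≥ 3 := by
      have hα2 : α ^ 2 ≠ 0 := pow_ne_zero _ hα0
      have hβ2 : β ^ 2 = (α ^ 2)⁻¹ := by
        field_simp
        linarith [hprodsq]
      rw [haα, ← hβ2]
      linarith [hsq3]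
    have h2 : a ^ 4 - 3 * a ^ 2 + 1 ≥ 0 := by
      have ha2 : (0:ℝ) < a ^ 2 := by positivity
      have := mul_le_mul_of_nonneg_left h1 (le_of_lt ha2)
      rw [mul_add, mul_inv_cancel₀ (ne_of_gt ha2)] at this
      nlinarith
    nlinarith [sq_nonneg (a - 1), sq_nonneg (a + 1), sq_nonneg a]
  have ha1' : 1 < a := by nlinarith
  set t : ℝ := (a ^ 2)⁻¹ with ht_def
  have ht0 : 0 < t := by positivity
  have ht1 : t < 1 := by
    rw [ht_def]
    have h : 1 < a ^ 2 := by nlinarith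
    exact inv_lt_one_of_one_lt₀ h
  have h1t : 0 < 1 - t := by linarith
  -- nonvanishing of factors
  have hne : ∀ d ∈ n.divisors, α ^ (n / d) - β ^ (n / d) ≠ 0 := by
    intro d hd
    have hd' := Nat.mem_divisors.mp hd
    have hm : 0 < n / d := Nat.div_pos (Nat.le_of_dvd (by omega) hd'.1)
      (Nat.pos_of_mem_divisors hd)
    intro h
    apply hnru (n / d) hm
    rw [div_pow, div_eq_one_iff_eq (pow_ne_zero _ hβ0)]
    linarith
  -- log of product as a sum
  rw [Real.log_abs (∏ d ∈ n.divisors,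
      (α ^ (n / d) - β ^ (n / d)) ^ (ArithmeticFunction.moebius d)),
    Real.log_prod (fun d hd => zpow_ne_zero _ (hne d hd))]
  have hrw : ∀ d ∈ n.divisors,
      Real.log ((α ^ (n / d) - β ^ (n / d)) ^ (ArithmeticFunction.moebius d)) =
      (ArithmeticFunction.moebius d : ℝ) * Real.log |α ^ (n / d) - β ^ (n / d)| := by
    intro d hd
    rw [Real.log_zpow, Real.log_abs]
  rw [Finset.sum_congr rfl hrw]
  -- termwise lower bound
  have hterm : ∀ d ∈ n.divisors,
      (ArithmeticFunction.moebius d : ℝ) * ((n / d : ℕ) : ℝ) * Real.log a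
        - t ^ (n / d) / (1 - t)
      ≤ (ArithmeticFunction.moebius d : ℝ) * Real.log |α ^ (n / d) - β ^ (n / d)| := by
    intro d hd
    set m := n / d with hm_def
    have hd' := Nat.mem_divisors.mp hd
    have hm : 0 < m := Nat.div_pos (Nat.le_of_dvd (by omega) hd'.1)
      (Nat.pos_of_mem_divisors hd)
    have htm_le : t ^ m ≤ t := by
      calc t ^ m ≤ t ^ 1 := pow_le_pow_of_le_one (le_of_lt ht0) (le_of_lt ht1) hm
        _ = t := pow_one t
    have htm0 : 0 < t ^ m := by positivity
    have h1tm : 0 < 1 - t ^ m := by linarith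
    have hA0 : (0:ℝ) < a ^ m := by positivity
    have hAβ : |β| ^ m = a ^ m * t ^ m := by
      rw [hβa, ht_def, ← inv_pow, ← mul_pow]
      congr 1
      field_simp
    -- bounds on |α^m - β^m|
    have hlow : a ^ m * (1 - t ^ m) ≤ |α ^ m - β ^ m| := by
      have := abs_sub_abs_le_abs_sub (α ^ m) (β ^ m)
      rw [abs_pow, abs_pow, ← ha_def] at this
      rw [hAβ] at this
      nlinarith
    have hhigh : |α ^ m - β ^ m| ≤ a ^ m * (1 + t ^ m) := by
      have := abs_sub (α ^ m) (β ^ m)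
      rw [abs_pow, abs_pow, ← ha_def, hAβ] at this
      nlinarith
    have hfac_pos : (0:ℝ) < |α ^ m - β ^ m| := abs_pos.mpr (hne d hd)
    -- log bounds
    have hloglow : (m : ℝ) * Real.log a - t ^ m / (1 - t) ≤ Real.log |α ^ m - β ^ m| := by
      have h1 : Real.log (a ^ m * (1 - t ^ m)) ≤ Real.log |α ^ m - β ^ m| :=
        Real.log_le_log (by positivity) hlow
      rw [Real.log_mul (ne_of_gt hA0) (ne_of_gt h1tm), Real.log_pow] at h1
      have h2 : -(t ^ m / (1 - t)) ≤ Real.log (1 - t ^ m) := by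
        have h3 := Real.one_sub_inv_le_log_of_pos h1tm
        have h4 : 1 - (1 - t ^ m)⁻¹ = -(t ^ m / (1 - t ^ m)) := by field_simp; ring
        rw [h4] at h3
        have h5 : t ^ m / (1 - t ^ m) ≤ t ^ m / (1 - t) :=
          div_le_div_of_nonneg_left (le_of_lt htm0) h1t (by linarith)
        linarith
      linarith
    have hloghigh : Real.log |α ^ m - β ^ m| ≤ (m : ℝ) * Real.log a + t ^ m / (1 - t) := by
      have h1 : Real.log |α ^ m - β ^ m| ≤ Real.log (a ^ m * (1 + t ^ m)) :=
        Real.log_le_log hfac_pos hhigh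
      rw [Real.log_mul (ne_of_gt hA0) (by positivity), Real.log_pow] at h1
      have h2 : Real.log (1 + t ^ m) ≤ t ^ m / (1 - t) := by
        have h3 := Real.log_le_sub_one_of_pos (show (0:ℝ) < 1 + t ^ m by positivity)
        have h4 : t ^ m ≤ t ^ m / (1 - t) := by
          rw [le_div_iff₀ h1t]
          nlinarith
        linarith
      linarith
    -- case analysis on μ d
    rcases eq_or_ne (ArithmeticFunction.moebius d) 0 with h | h
    · rw [h]
      push_cast
      have : (0:ℝ) ≤ t ^ m / (1 - t) := by positivity
      linarith
    · rcases (ArithmeticFunction.moebius_ne_zero_iff_eq_or.mp h) with h | h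
      · rw [h]; push_cast; linarith
      · rw [h]; push_cast; linarith
  have hsum_le := Finset.sum_le_sum hterm
  refine le_trans ?_ hsum_le
  rw [Finset.sum_sub_distrib]
  have hsum1 : ∑ d ∈ n.divisors,
      (ArithmeticFunction.moebius d : ℝ) * ((n / d : ℕ) : ℝ) * Real.log a
      = (Nat.totient n : ℝ) * Real.log a := by
    rw [← Finset.sum_mul, ← totient_eq_sum_moebius_real n (by omega)]
  rw [hsum1]
  -- bound the error sum
  have herr : ∑ d ∈ n.divisors, t ^ (n / d) / (1 - t) ≤ 1.28 := by
    have h1 : ∑ d ∈ n.divisors, t ^ (n / d) = ∑ d ∈ n.divisors, t ^ d :=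
      Nat.sum_div_divisors n (t ^ ·)
    have h2 : ∑ d ∈ n.divisors, t ^ d ≤ ∑ d ∈ Finset.Icc 1 n, t ^ d := by
      apply Finset.sum_le_sum_of_subset_of_nonneg
      · intro d hd
        have hd' := Nat.mem_divisors.mp hd
        rw [Finset.mem_Icc]
        exact ⟨Nat.pos_of_mem_divisors hd, Nat.le_of_dvd (by omega) hd'.1⟩
      · intro i _ _; positivity
    have h3 : ∑ d ∈ Finset.Icc 1 n, t ^ d ≤ t / (1 - t) := by
      have hrange : ∑ d ∈ Finset.Icc 1 n, t ^ d = t * ∑ i ∈ Finset.range n, t ^ i := by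
        rw [Finset.mul_sum]
        rw [← Finset.Ico_add_one_right_eq_Icc, Finset.sum_Ico_eq_sum_range]
        apply Finset.sum_congr (by simp)
        intro i _
        rw [← pow_succ']
        congr 1
        omega
      rw [hrange]
      have hgeom : ∑ i ∈ Finset.range n, t ^ i ≤ (1 - t)⁻¹ := by
        rw [geom_sum_eq (ne_of_lt ht1) n,
          div_le_iff_of_neg (show t - 1 < 0 by linarith)]
        have h5 : (1 - t)⁻¹ * (t - 1) = -1 := by field_simp; ring
        rw [h5]
        nlinarith [pow_pos ht0 n]
      calc t * ∑ i ∈ Finset.range n, t ^ i ≤ t * (1 - t)⁻¹ :=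
            mul_le_mul_of_nonneg_left hgeom (le_of_lt ht0)
        _ = t / (1 - t) := by rw [div_eq_mul_inv]
    have h4 : t / (1 - t) / (1 - t) ≤ 1 := by
      rw [div_div, div_le_one (by positivity)]
      have ha2 : a ≤ a ^ 2 - 1 := by linarith
      have h5 : a ^ 2 ≤ (a ^ 2 - 1) ^ 2 := by nlinarith
      have hat : a ^ 2 * t = 1 := by
        rw [ht_def]; field_simp
      have he : a ^ 2 * (1 - t) = a ^ 2 - 1 := by
        rw [mul_sub, hat, mul_one]
      nlinarith [mul_le_mul_of_nonneg_right h5 (le_of_lt (mul_pos ht0 ht0)), hat, he,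
        sq_nonneg (1 - t), ht0.le]
    calc ∑ d ∈ n.divisors, t ^ (n / d) / (1 - t)
        = (∑ d ∈ n.divisors, t ^ (n / d)) / (1 - t) := by rw [Finset.sum_div]
      _ ≤ (t / (1 - t)) / (1 - t) := by
          gcongr
          rw [h1]
          exact le_trans h2 h3
      _ ≤ 1 := h4
      _ ≤ 1.28 := by norm_num
  linarith
end

section
/- For every real number α ≥ (1+√5)/2, the infinite product ∏_{d=1}^{∞} (1 − α^{-2d})·(1 + α^{-2d})^{-1} converges and is greater than 0.278293. -/
/-!
Put `q = α⁻² ≤ φ⁻² < 0.381966012 =: r`; each factor `(1 - x) / (1 + x)` is decreasing in `x`,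
so the product only decreases when `q` is replaced by `r`. Split it after eleven factors. The
head is evaluated exactly at `r`. In the tail write `(1 - x) / (1 + x) = 1 - 2x / (1 + x)`; the
Weierstrass inequality `∏ (1 - aᵢ) ≥ 1 - ∑ aᵢ` and `2x / (1 + x) ≤ 2x` bound it below by
`1 - 2 r¹² / (1 - r)`, which is within `10⁻⁴` of `1`.
-/

open Finset Filter Real

theorem Finset.one_sub_sum_le_prod_one_sub {ι R : Type*} [CommRing R] [PartialOrder R]
    [IsOrderedRing R] (s : Finset ι) {a : ι → R} (h0 : ∀ i ∈ s, 0 ≤ a i)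
    (h1 : ∀ i ∈ s, a i ≤ 1) : 1 - ∑ i ∈ s, a i ≤ ∏ i ∈ s, (1 - a i) := by
  classical
  induction s using Finset.induction_on with
  | empty => simp
  | insert j s hj ih =>
    rw [sum_insert hj, prod_insert hj]
    have hs0 : ∀ i ∈ s, 0 ≤ a i := fun i hi => h0 i (mem_insert_of_mem hi)
    have haj : 0 ≤ 1 - a j := sub_nonneg.2 (h1 j (mem_insert_self j s))
    have hprod := mul_le_mul_of_nonneg_left
      (ih hs0 fun i hi => h1 i (mem_insert_of_mem hi)) haj
    have hcross := mul_nonneg (h0 j (mem_insert_self j s)) (sum_nonneg hs0)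
    linear_combination hprod + hcross

theorem one_sub_mul_one_add_inv_eq {K : Type*} [Field K] {x : K} (hx : 1 + x ≠ 0) :
    (1 - x) * (1 + x)⁻¹ = 1 - 2 * x / (1 + x) := by
  field_simp
  ring

section Factor

variable {K : Type*} [Field K] [LinearOrder K] [IsStrictOrderedRing K] {x y : K}

theorem one_sub_mul_one_add_inv_nonneg (hx : -1 < x) (hx1 : x ≤ 1) :
    0 ≤ (1 - x) * (1 + x)⁻¹ :=
  mul_nonneg (by linarith) (inv_nonneg.2 (by linarith))

theorem one_sub_mul_one_add_inv_anti (hx : -1 < x) (hxy : x ≤ y) :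
    (1 - y) * (1 + y)⁻¹ ≤ (1 - x) * (1 + x)⁻¹ := by
  rw [← div_eq_mul_inv, ← div_eq_mul_inv, div_le_div_iff₀ (by linarith) (by linarith)]
  nlinarith

theorem two_mul_div_one_add_le_two_mul (hx : 0 ≤ x) : 2 * x / (1 + x) ≤ 2 * x :=
  div_le_self (by positivity) (by linarith)

theorem two_mul_div_one_add_le_one (hx : 0 ≤ x) (hx1 : x ≤ 1) : 2 * x / (1 + x) ≤ 1 := by
  rw [div_le_one (by linarith)]
  linarith

end Factor

theorem sum_Ico_pow_succ_le {K : Type*} [Field K] [LinearOrder K] [IsStrictOrderedRing K]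
    {r : K} (hr0 : 0 ≤ r) (hr1 : r < 1) (m n : ℕ) :
    ∑ i ∈ Ico m n, r ^ (i + 1) ≤ r ^ (m + 1) / (1 - r) := by
  simp only [pow_succ', ← mul_sum, mul_div_assoc]
  exact mul_le_mul_of_nonneg_left (geom_sum_Ico_le_of_lt_one hr0 hr1) hr0

section Product

variable {q r : ℝ}

theorem multipliable_one_sub_pow_mul_one_add_pow_inv (hq0 : 0 ≤ q) (hq1 : q < 1) :
    Multipliable fun d : ℕ => (1 - q ^ (d + 1)) * (1 + q ^ (d + 1))⁻¹ := by
  have hx : ∀ d : ℕ, 0 ≤ q ^ (d + 1) := fun d => pow_nonneg hq0 _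
  have hgeom : Summable fun d : ℕ => 2 * q ^ (d + 1) :=
    ((summable_geometric_of_lt_one hq0 hq1).mul_left (2 * q)).congr fun d => by ring
  have hsum : Summable fun d : ℕ => -(2 * q ^ (d + 1) / (1 + q ^ (d + 1))) :=
    (hgeom.of_nonneg_of_le (fun d => by positivity)
      fun d => two_mul_div_one_add_le_two_mul (hx d)).neg
  refine (Real.multipliable_one_add_of_summable hsum).congr fun d => ?_
  rw [one_sub_mul_one_add_inv_eq (by linarith [hx d]), sub_eq_add_neg]

theorem one_sub_two_mul_le_prod_Ico (hq0 : 0 ≤ q) (hqr : q ≤ r) (hr1 : r < 1) (N n : ℕ) :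
    1 - 2 * r ^ (N + 1) / (1 - r) ≤
      ∏ i ∈ Ico N n, (1 - q ^ (i + 1)) * (1 + q ^ (i + 1))⁻¹ := by
  have hx : ∀ i, 0 ≤ q ^ (i + 1) := fun i => pow_nonneg hq0 _
  have hx1 : ∀ i, q ^ (i + 1) ≤ 1 := fun i => pow_le_one₀ hq0 (hqr.trans hr1.le)
  have hsum : ∑ i ∈ Ico N n, 2 * q ^ (i + 1) / (1 + q ^ (i + 1)) ≤ 2 * r ^ (N + 1) / (1 - r) :=
    calc ∑ i ∈ Ico N n, 2 * q ^ (i + 1) / (1 + q ^ (i + 1))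
        ≤ ∑ i ∈ Ico N n, 2 * r ^ (i + 1) := sum_le_sum fun i _ =>
          (two_mul_div_one_add_le_two_mul (hx i)).trans (by gcongr)
      _ ≤ 2 * r ^ (N + 1) / (1 - r) := by
          rw [← mul_sum, mul_div_assoc]
          gcongr
          exact sum_Ico_pow_succ_le (hq0.trans hqr) hr1 N n
  calc 1 - 2 * r ^ (N + 1) / (1 - r)
      ≤ 1 - ∑ i ∈ Ico N n, 2 * q ^ (i + 1) / (1 + q ^ (i + 1)) := by linarith
    _ ≤ ∏ i ∈ Ico N n, (1 - 2 * q ^ (i + 1) / (1 + q ^ (i + 1))) :=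
        one_sub_sum_le_prod_one_sub _ (fun i _ => by positivity)
          fun i _ => two_mul_div_one_add_le_one (hx i) (hx1 i)
    _ = ∏ i ∈ Ico N n, (1 - q ^ (i + 1)) * (1 + q ^ (i + 1))⁻¹ :=
        prod_congr rfl fun i _ => (one_sub_mul_one_add_inv_eq (by linarith [hx i])).symm

theorem prod_range_mul_le_tprod (hq0 : 0 ≤ q) (hqr : q ≤ r) (hr1 : r < 1) (N : ℕ)
    (htail : 0 ≤ 1 - 2 * r ^ (N + 1) / (1 - r)) :
    (∏ i ∈ range N, (1 - r ^ (i + 1)) * (1 + r ^ (i + 1))⁻¹) * (1 - 2 * r ^ (N + 1) / (1 - r)) ≤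
      ∏' d : ℕ, (1 - q ^ (d + 1)) * (1 + q ^ (d + 1))⁻¹ := by
  have hx : ∀ i, -1 < q ^ (i + 1) := fun i => by linarith [pow_nonneg hq0 (i + 1)]
  have hhead : ∏ i ∈ range N, (1 - r ^ (i + 1)) * (1 + r ^ (i + 1))⁻¹ ≤
      ∏ i ∈ range N, (1 - q ^ (i + 1)) * (1 + q ^ (i + 1))⁻¹ :=
    prod_le_prod
      (fun i _ => one_sub_mul_one_add_inv_nonneg (by linarith [pow_nonneg (hq0.trans hqr) (i + 1)])
        (pow_le_one₀ (hq0.trans hqr) hr1.le))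
      fun i _ => one_sub_mul_one_add_inv_anti (hx i) (pow_le_pow_left₀ hq0 hqr _)
  refine ge_of_tendsto (multipliable_one_sub_pow_mul_one_add_pow_inv hq0 (hqr.trans_lt hr1)
    ).hasProd.tendsto_prod_nat (eventually_atTop.2 ⟨N, fun n hn => ?_⟩)
  rw [← prod_range_mul_prod_Ico _ hn]
  exact mul_le_mul hhead (one_sub_two_mul_le_prod_Ico hq0 hqr hr1 N n) htail
    (prod_nonneg fun i _ => one_sub_mul_one_add_inv_nonneg (hx i)
      (pow_le_one₀ hq0 (hqr.trans hr1.le)))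

end Product

open scoped goldenRatio in
theorem inv_sq_le_goldenConj_sq {α : ℝ} (hα : φ ≤ α) : (α ^ 2)⁻¹ ≤ ψ ^ 2 := by
  rw [← neg_sq ψ, ← inv_goldenRatio, inv_pow]
  exact inv_anti₀ (by positivity) (pow_le_pow_left₀ goldenRatio_pos.le hα 2)

/-- For `α ≥ (1+√5)/2`, the product `∏_{d≥1} (1 − α^{-2d})(1 + α^{-2d})⁻¹`
converges and exceeds `0.278293`. -/
theorem infinite_product_lower_bound
    (α : ℝ) (hα : (1 + Real.sqrt 5) / 2 ≤ α) :
    Multipliable (fun d : ℕ =>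
        (1 - (α ^ (2 * (d + 1)))⁻¹) * (1 + (α ^ (2 * (d + 1)))⁻¹)⁻¹) ∧
      (0.278293 : ℝ) <
        ∏' d : ℕ, (1 - (α ^ (2 * (d + 1)))⁻¹) * (1 + (α ^ (2 * (d + 1)))⁻¹)⁻¹ := by
  have hq0 : 0 ≤ (α ^ 2)⁻¹ := inv_nonneg.2 (sq_nonneg α)
  have hqr : (α ^ 2)⁻¹ ≤ 0.381966012 := by
    have h5 : (2.236067977 : ℝ) ≤ √5 := by
      rw [Real.le_sqrt (by norm_num) (by norm_num)]
      norm_num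
    have hψ := inv_sq_le_goldenConj_sq hα
    rw [goldenConj_sq, goldenConj] at hψ
    linarith
  simp only [pow_mul, ← inv_pow (α ^ 2)]
  refine ⟨multipliable_one_sub_pow_mul_one_add_pow_inv hq0 (by linarith), ?_⟩
  refine lt_of_lt_of_le ?_ (prod_range_mul_le_tprod hq0 hqr (by norm_num) 11 (by norm_num))
  norm_num [prod_range_succ]
end

section
/- Let r, s be coprime nonzero integers with r^2+4s ≠ 0, let α, β be the roots of x^2 - rx - s = 0 with |α| ≥ |β|, and assume α/β is not a root of unity. Let U_0 = 0, U_1 = 1, U_{n+2} = r·U_{n+1} + s·U_n. Suppose n ≥ 150 and |U_n| = m_1!·m_2!⋯m_k! with 1 < m_1 ≤ ⋯ ≤ m_k, and set M_n = ∏_{p prime, p ≡ ±1 (mod n)} p^{v_p(U_n)}. Then log M_n ≤ Σ_{i : m_i ≥ n-1} (m_i − 1) · Σ_{p prime, p ≤ m_i, p ≡ ±1 (mod n)} (log p)/(p − 1). -/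
/-!
Writing `|U n| = ∏ mᵢ!`, the number `log M_n` is `Σᵢ Σ_p v_p(mᵢ!) log p` over the primes
`p ≡ ±1 (mod n)` dividing `U n`. Only primes `p ≤ mᵢ` divide `mᵢ!`, and for them Legendre's
formula gives `(p - 1) v_p(mᵢ!) ≤ mᵢ - 1`. A prime `p ≡ ±1 (mod n)` has `n ∣ p ∓ 1 ≠ 0`, so
`p ≥ n - 1`, and the factorials with `mᵢ < n - 1` contribute nothing.
-/

open Finset Nat

lemma Nat.sub_one_mul_factorization_factorial_lt {p m : ℕ} (hp : p.Prime) (hm : m ≠ 0) :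
    (p - 1) * (m !).factorization p < m := by
  have := Fact.mk hp
  rw [Nat.factorization_def _ hp]
  exact sub_one_mul_padicValNat_factorial_lt_of_ne_zero p hm

lemma factorization_factorial_mul_log_le {p m : ℕ} (hp : p.Prime) (hm : m ≠ 0) :
    ((m !).factorization p : ℝ) * Real.log p ≤ ((m : ℝ) - 1) * (Real.log p / ((p : ℝ) - 1)) := by
  have hp1 : (1 : ℝ) < p := by exact_mod_cast hp.one_lt
  have hlt : ((p - 1) * (m !).factorization p : ℕ) + 1 ≤ m :=
    Nat.sub_one_mul_factorization_factorial_lt hp hm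
  have hle : ((p : ℝ) - 1) * (m !).factorization p ≤ (m : ℝ) - 1 := by
    have := (Nat.cast_le (α := ℝ)).mpr hlt
    push_cast [Nat.cast_sub hp.one_le] at this
    linarith
  rw [mul_div_assoc', le_div_iff₀ (by linarith), mul_right_comm]
  exact mul_le_mul_of_nonneg_right (by linarith) (Real.log_nonneg hp1.le)

lemma le_add_one_of_natCast_eq_one_or_neg_one {n p : ℕ} (hp : p ≠ 1)
    (h : (p : ZMod n) = 1 ∨ (p : ZMod n) = -1) : n ≤ p + 1 := by
  obtain ⟨ε, hε, hpε⟩ : ∃ ε : ℤ, (ε = 1 ∨ ε = -1) ∧ ((p : ℤ) : ZMod n) = (ε : ZMod n) := by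
    rcases h with h | h
    · exact ⟨1, Or.inl rfl, by simpa using h⟩
    · exact ⟨-1, Or.inr rfl, by simpa using h⟩
  have hdvd : (n : ℤ) ∣ ε - p := (ZMod.intCast_eq_intCast_iff_dvd_sub _ _ _).mp hpε
  have hne : ε - p ≠ 0 := by omega
  have := Int.le_of_dvd (abs_pos.mpr hne) ((dvd_abs _ _).mpr hdvd)
  rcases hε with rfl | rfl <;> rw [le_abs'] at this <;> omega

lemma Real.log_natCast_prod_pow (S : Finset ℕ) (e : ℕ → ℕ) (hS : ∀ p ∈ S, p ≠ 0) :
    Real.log (∏ p ∈ S, p ^ e p : ℕ) = ∑ p ∈ S, (e p : ℝ) * Real.log p := by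
  push_cast
  rw [Real.log_prod fun p hp => pow_ne_zero _ (Nat.cast_ne_zero.mpr (hS p hp))]
  simp_rw [Real.log_pow]

lemma sum_factorization_factorial_mul_log_le (P : ℕ → Prop) [DecidablePred P] (m : ℕ)
    (S : Finset ℕ) (hS : ∀ p ∈ S, p.Prime ∧ P p) :
    ∑ p ∈ S, ((m !).factorization p : ℝ) * Real.log p ≤
      ((m : ℝ) - 1) * ∑ p ∈ (range (m + 1)).filter (fun p => p.Prime ∧ P p),
        Real.log p / ((p : ℝ) - 1) := by
  have hS' : S.filter (· ≤ m) ⊆ (range (m + 1)).filter (fun p => p.Prime ∧ P p) := by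
    intro p hp
    rw [mem_filter] at hp ⊢
    exact ⟨mem_range.mpr (Nat.lt_succ_of_le hp.2), hS p hp.1⟩
  have hm_of_mem {p : ℕ} (hp : p ∈ (range (m + 1)).filter (fun p => p.Prime ∧ P p)) :
      p.Prime ∧ m ≠ 0 := by
    rw [mem_filter, mem_range] at hp
    exact ⟨hp.2.1, by linarith [hp.2.1.two_le]⟩
  calc ∑ p ∈ S, ((m !).factorization p : ℝ) * Real.log p
      = ∑ p ∈ S.filter (· ≤ m), ((m !).factorization p : ℝ) * Real.log p := by
        refine (sum_filter_of_ne fun p _ hne => ?_).symm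
        by_contra hpm
        simp [factorization_factorial_eq_zero_of_lt (not_le.mp hpm)] at hne
    _ ≤ ∑ p ∈ S.filter (· ≤ m), ((m : ℝ) - 1) * (Real.log p / ((p : ℝ) - 1)) :=
        sum_le_sum fun p hp =>
          factorization_factorial_mul_log_le (hm_of_mem (hS' hp)).1 (hm_of_mem (hS' hp)).2
    _ ≤ ∑ p ∈ (range (m + 1)).filter (fun p => p.Prime ∧ P p),
          ((m : ℝ) - 1) * (Real.log p / ((p : ℝ) - 1)) := by
        refine sum_le_sum_of_subset_of_nonneg hS' fun p hp _ => ?_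
        obtain ⟨hp, hm⟩ := hm_of_mem hp
        have hp1 : (1 : ℝ) < p := by exact_mod_cast hp.one_lt
        have hm1 : (1 : ℝ) ≤ m := by exact_mod_cast Nat.one_le_iff_ne_zero.mpr hm
        exact mul_nonneg (by linarith) (div_nonneg (Real.log_nonneg hp1.le) (by linarith))
    _ = _ := (mul_sum _ _ _).symm

theorem log_Mn_upper_bound_via_prime_sums_general
    (U : ℕ → ℤ)
    (n : ℕ)
    (k : ℕ) (m : Fin k → ℕ)
    (hfac : (U n).natAbs = ∏ i, Nat.factorial (m i))
    (M : ℕ)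
    (hM : M = ∏ p ∈ (U n).natAbs.primeFactors.filter
        (fun p : ℕ => (p : ZMod n) = 1 ∨ (p : ZMod n) = -1),
        p ^ (U n).natAbs.factorization p) :
    Real.log M ≤
      ∑ i ∈ Finset.univ.filter (fun i => n - 1 ≤ m i),
        ((m i : ℝ) - 1) *
          ∑ p ∈ (Finset.range (m i + 1)).filter
              (fun p : ℕ => p.Prime ∧ ((p : ZMod n) = 1 ∨ (p : ZMod n) = -1)),
            Real.log p / ((p : ℝ) - 1) := by
  set S := (U n).natAbs.primeFactors.filter (fun p : ℕ => (p : ZMod n) = 1 ∨ (p : ZMod n) = -1)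
  have hS : ∀ p ∈ S, p.Prime ∧ ((p : ZMod n) = 1 ∨ (p : ZMod n) = -1) := fun p hp =>
    ⟨prime_of_mem_primeFactors (mem_filter.mp hp).1, (mem_filter.mp hp).2⟩
  calc Real.log M
      = ∑ p ∈ S, ((U n).natAbs.factorization p : ℝ) * Real.log p := by
        rw [hM]
        exact Real.log_natCast_prod_pow _ _ fun p hp => (hS p hp).1.ne_zero
    _ = ∑ i, ∑ p ∈ S, ((m i)!.factorization p : ℝ) * Real.log p := by
        rw [sum_comm]
        refine sum_congr rfl fun p _ => ?_
        rw [hfac, factorization_prod_apply fun i _ => factorial_ne_zero _]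
        push_cast
        rw [sum_mul]
    _ ≤ ∑ i, ((m i : ℝ) - 1) * ∑ p ∈ (range (m i + 1)).filter
          (fun p : ℕ => p.Prime ∧ ((p : ZMod n) = 1 ∨ (p : ZMod n) = -1)),
            Real.log p / ((p : ℝ) - 1) :=
        sum_le_sum fun i _ => sum_factorization_factorial_mul_log_le _ (m i) S hS
    _ = _ := by
        refine (sum_filter_of_ne fun i _ hne => ?_).symm
        by_contra hmi
        refine hne (mul_eq_zero_of_right _ (sum_eq_zero fun p hp => ?_))
        rw [mem_filter, mem_range] at hp
        have := le_add_one_of_natCast_eq_one_or_neg_one hp.2.1.ne_one hp.2.2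
        omega

/-- If `n ≥ 150` and `|U n| = m₁! ⋯ m_k!` with `1 < m₁ ≤ ⋯ ≤ m_k`, then
`log M_n ≤ Σ_{i : mᵢ ≥ n−1} (mᵢ − 1) Σ_{p ≤ mᵢ, p ≡ ±1 (mod n)} log p/(p−1)`. -/
theorem log_Mn_upper_bound_via_prime_sums
    (r s : ℤ) (hr : r ≠ 0) (hs : s ≠ 0) (hrs : IsCoprime r s)
    (hdisc : r ^ 2 + 4 * s ≠ 0)
    (α β : ℂ) (hsum : α + β = (r : ℂ)) (hprod : α * β = -(s : ℂ))
    (habs : ‖β‖ ≤ ‖α‖)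
    (hnru : ∀ k : ℕ, 0 < k → (α / β) ^ k ≠ 1)
    (U : ℕ → ℤ) (hU0 : U 0 = 0) (hU1 : U 1 = 1)
    (hUrec : ∀ n : ℕ, U (n + 2) = r * U (n + 1) + s * U n)
    (n : ℕ) (hn : 150 ≤ n)
    (k : ℕ) (hk : 1 ≤ k) (m : Fin k → ℕ)
    (hm1 : ∀ i, 1 < m i) (hmono : Monotone m)
    (hfac : (U n).natAbs = ∏ i, Nat.factorial (m i))
    (M : ℕ)
    (hM : M = ∏ p ∈ (U n).natAbs.primeFactors.filter
        (fun p : ℕ => (p : ZMod n) = 1 ∨ (p : ZMod n) = -1),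
        p ^ (U n).natAbs.factorization p) :
    Real.log M ≤
      ∑ i ∈ Finset.univ.filter (fun i => n - 1 ≤ m i),
        ((m i : ℝ) - 1) *
          ∑ p ∈ (Finset.range (m i + 1)).filter
              (fun p : ℕ => p.Prime ∧ ((p : ZMod n) = 1 ∨ (p : ZMod n) = -1)),
            Real.log p / ((p : ℝ) - 1) :=
  log_Mn_upper_bound_via_prime_sums_general U n k m hfac M hM
end
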